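/- Let q : ℤ² → ℝ³ be a DIIAS with affine normal ξ = (0,0,1). Then q can be obtained by the discrete centre-chord construction: there exist α, β : ℤ → ℝ² such that, writing q(u,v) = (x(u,v), z(u,v)) with x(u,v) ∈ ℝ² and z(u,v) ∈ ℝ, one has x(u,v) = ½(α(u) + β(v)) for all (u,v), and z satisfies z(u+1,v) − z(u,v) = det(x(u+1,v) − x(u,v), y(u,v)) and z(u,v+1) − z(u,v) = det(x(u,v+1) − x(u,v), y(u,v)) for all (u,v), where y(u,v) = ½(β(v) − α(u)). -/

import Mathlib

noncomputable section

abbrev R3 : Type := ℝ × ℝ × ℝ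
abbrev R2 : Type := ℝ × ℝ

/-- Determinant of the 3×3 matrix with columns `a`, `b`, `c`. -/
def det3 (a b c : R3) : ℝ :=
  a.1 * (b.2.1 * c.2.2 - b.2.2 * c.2.1)
    - b.1 * (a.2.1 * c.2.2 - a.2.2 * c.2.1)
    + c.1 * (a.2.1 * b.2.2 - a.2.2 * b.2.1)

/-- Determinant of the 2×2 matrix with columns `a`, `b`. -/
def det2 (a b : R2) : ℝ := a.1 * b.2 - a.2 * b.1

def e3 : R3 := ((0 : ℝ), (0 : ℝ), (1 : ℝ))

/-- First discrete partial derivative `q₁`. -/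
def D1 (q : ℤ → ℤ → R3) (u v : ℤ) : R3 := q (u + 1) v - q u v

/-- Second discrete partial derivative `q₂`. -/
def D2 (q : ℤ → ℤ → R3) (u v : ℤ) : R3 := q u (v + 1) - q u v

/-- Mixed discrete second derivative `q₁₂`. -/
def D12 (q : ℤ → ℤ → R3) (u v : ℤ) : R3 :=
  q (u + 1) (v + 1) - q (u + 1) v - q u (v + 1) + q u v

/-- Discrete second derivative `q₁₁`. -/
def D11 (q : ℤ → ℤ → R3) (u v : ℤ) : R3 := q (u + 1) v - (2 : ℝ) • q u v + q (u - 1) v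

/-- Discrete second derivative `q₂₂`. -/
def D22 (q : ℤ → ℤ → R3) (u v : ℤ) : R3 := q u (v + 1) - (2 : ℝ) • q u v + q u (v - 1)

/-- The discrete affine metric `Ω(u,v) = [q₁(u,v), q₂(u,v), ξ]`. -/
def Omega (q : ℤ → ℤ → R3) (ξ : R3) (u v : ℤ) : ℝ := det3 (D1 q u v) (D2 q u v) ξ

/-- Cubic form coefficient `A(u,v) = [q₁(u−1,v), q₁(u,v), ξ]`. -/
def Acoef (q : ℤ → ℤ → R3) (ξ : R3) (u v : ℤ) : ℝ := det3 (D1 q (u - 1) v) (D1 q u v) ξ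

/-- Cubic form coefficient `B(u,v) = [q₂(u,v), q₂(u,v−1), ξ]`. -/
def Bcoef (q : ℤ → ℤ → R3) (ξ : R3) (u v : ℤ) : ℝ := det3 (D2 q u v) (D2 q u (v - 1)) ξ

/-- `q` is a discrete improper indefinite affine sphere with affine normal `ξ`. -/
def IsDIIAS (q : ℤ → ℤ → R3) (ξ : R3) : Prop :=
  ∀ u v : ℤ,
    D12 q u v = Omega q ξ u v • ξ ∧
    0 < Omega q ξ u v ∧
    D1 q (u - 1) v ∈ Submodule.span ℝ {D1 q u v, D2 q u v} ∧
    D2 q u (v - 1) ∈ Submodule.span ℝ {D1 q u v, D2 q u v}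

/-- `x(u,v) = ½(α(u)+β(v))`. -/
def xcc (α β : ℤ → R2) (u v : ℤ) : R2 := (1 / 2 : ℝ) • (α u + β v)

/-- `y(u,v) = ½(β(v)−α(u))`. -/
def ycc (α β : ℤ → R2) (u v : ℤ) : R2 := (1 / 2 : ℝ) • (β v - α u)

/-- `z` satisfies the discrete centre-chord equations for the pair `(α,β)`. -/
def IsCentreChordZ (α β : ℤ → R2) (z : ℤ → ℤ → ℝ) : Prop :=
  ∀ u v : ℤ,
    z (u + 1) v - z u v = det2 (xcc α β (u + 1) v - xcc α β u v) (ycc α β u v) ∧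
    z u (v + 1) - z u v = det2 (xcc α β u (v + 1) - xcc α β u v) (ycc α β u v)

/-- The centre-chord net `q(u,v) = (x(u,v), z(u,v))`. -/
def ccq (α β : ℤ → R2) (z : ℤ → ℤ → ℝ) (u v : ℤ) : R3 :=
  ((xcc α β u v).1, (xcc α β u v).2, z u v)

/-- `Ω(u,v) = ¼ det(α₁(u), β₂(v))` of the centre-chord construction. -/
def OmegaCC (α β : ℤ → R2) (u v : ℤ) : ℝ :=
  (1 / 4 : ℝ) * det2 (α (u + 1) - α u) (β (v + 1) - β v)

/-- `α₁(u)` is discretely parallel to `β(v)`. -/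
def dpAB (α β : ℤ → R2) (u v : ℤ) : Prop :=
  0 < det2 (α (u + 1) - α u) (β (v + 1) - β v) * det2 (α (u + 1) - α u) (β (v - 1) - β v)

/-- `β₂(v)` is discretely parallel to `α(u)`. -/
def dpBA (α β : ℤ → R2) (u v : ℤ) : Prop :=
  0 < det2 (β (v + 1) - β v) (α (u + 1) - α u) * det2 (β (v + 1) - β v) (α (u - 1) - α u)

/-- Genericity assumption (G1). -/
def G1 (α β : ℤ → R2) : Prop :=
  ∀ u v : ℤ,
    LinearIndependent ℝ ![β (v - 1) - α u, β (v + 1) - α u] ∧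
    ∃ s t : ℝ, 0 < s ∧ 0 < t ∧
      β v - α u = s • (β (v - 1) - α u) + t • (β (v + 1) - α u)

/-- Genericity assumption (G2). -/
def G2 (α β : ℤ → R2) : Prop :=
  ∀ u v : ℤ,
    LinearIndependent ℝ ![α (u - 1) - β v, α (u + 1) - β v] ∧
    ∃ s t : ℝ, 0 < s ∧ 0 < t ∧
      α u - β v = s • (α (u - 1) - β v) + t • (α (u + 1) - β v)

/-- Genericity assumption (G3): no edge of `α` is parallel to an edge of `β`. -/
def G3 (α β : ℤ → R2) : Prop :=
  ∀ u v : ℤ, det2 (α (u + 1) - α u) (β (v + 1) - β v) ≠ 0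

/-- Euclidean dot product on `ℝ³`. -/
def dot3 (a b : R3) : ℝ := a.1 * b.1 + a.2.1 * b.2.1 + a.2.2 * b.2.2

/-- Projection of `ℝ³` onto the first two coordinates. -/
def projxy (p : R3) : R2 := (p.1, p.2.1)

/-!
Since the normal `ξ = e₃` is vertical, `q₁₂ = Ω ξ` says that the horizontal part `x` of `q` has
vanishing mixed difference and that `z₁₂ = Ω = det(x₁, x₂)`. Hence there is a half-chord field `y`
with `y₁ = -x₁` and `y₂ = x₂`, unique up to a constant; then `x - y` depends on `u` only and `x + y`
on `v` only, and these are `α` and `β`.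

The defects `F = z₁ - det(x₁, y)` and `G = z₂ - det(x₂, y)` satisfy `F₂ = 0` and `G₁ = 0` because
`z₁₂ = det(x₁, x₂)`. Cramer's rule chooses the constant so that both vanish at the origin. Planarity
of the vertex stars gives `q₁(u-1,v) = l q₁ + m q₂` with `l > 0` (compare `Ω(u-1,v) = l Ω(u,v)`),
hence `F(u-1,0) = l F(u,0) + m G(0,0) = l F(u,0)`: so `F` vanishes on the `u`-axis and therefore
everywhere. Likewise for `G`.
-/

theorem Int.eq_zero_of_forall_sub_one_eq_mul {M₀ : Type*} [MulZeroClass M₀] [NoZeroDivisors M₀]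
    {f : ℤ → M₀} (h0 : f 0 = 0) (h : ∀ n, ∃ l ≠ 0, f (n - 1) = l * f n) (n : ℤ) : f n = 0 := by
  induction n using Int.induction_on with
  | zero => exact h0
  | succ n ih =>
    obtain ⟨l, hl, hn⟩ := h (n + 1)
    rw [add_sub_cancel_right, ih, eq_comm, mul_eq_zero] at hn
    exact hn.resolve_left hl
  | pred n ih =>
    obtain ⟨l, -, hn⟩ := h (-n)
    rw [hn, ih, mul_zero]

theorem Function.Periodic.eq_apply_zero {α : Type*} {f : ℤ → α} (h : Function.Periodic f 1)
    (n : ℤ) : f n = f 0 := by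
  simpa using h.int_mul_eq n

theorem exists_det2_eq_and_det2_eq {p r : R2} (h : det2 p r ≠ 0) (s t : ℝ) :
    ∃ y, det2 p y = s ∧ det2 r y = t := by
  have key : ∀ w : R2, det2 w ((det2 p r)⁻¹ • (s • r - t • p)) =
      (det2 p r)⁻¹ * (s * det2 w r - t * det2 w p) := by
    intro w
    simp only [det2, Prod.smul_fst, Prod.smul_snd, Prod.fst_sub, Prod.snd_sub, smul_eq_mul]
    ring
  refine ⟨(det2 p r)⁻¹ • (s • r - t • p), ?_, ?_⟩
  · rw [key, show det2 p p = 0 by simp [det2, mul_comm]]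
    field_simp
    ring
  · rw [key, show det2 r r = 0 by simp [det2, mul_comm],
      show det2 r p = -det2 p r by simp only [det2]; ring]
    field_simp
    ring

theorem det3_e3 (a b : R3) : det3 a b e3 = det2 (projxy a) (projxy b) := by
  simp only [det3, det2, e3, projxy]
  ring

theorem projxy_add (a b : R3) : projxy (a + b) = projxy a + projxy b := rfl

theorem projxy_sub (a b : R3) : projxy (a - b) = projxy a - projxy b := rfl

theorem projxy_smul_e3 (t : ℝ) : projxy (t • e3) = 0 := by
  simp [projxy, e3]

theorem D1_add_one_right (q : ℤ → ℤ → R3) (u v : ℤ) : D1 q u (v + 1) = D1 q u v + D12 q u v := by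
  simp only [D1, D12]
  abel

theorem D2_add_one_left (q : ℤ → ℤ → R3) (u v : ℤ) : D2 q (u + 1) v = D2 q u v + D12 q u v := by
  simp only [D2, D12]
  abel

def chordDefect (p : R3) (y : R2) : ℝ := p.2.2 - det2 (projxy p) y

theorem chordDefect_smul_add_smul (l m : ℝ) (p r : R3) (y : R2) :
    chordDefect (l • p + m • r) y = l * chordDefect p y + m * chordDefect r y := by
  simp only [chordDefect, det2, projxy, Prod.fst_add, Prod.snd_add, Prod.smul_fst,
    Prod.smul_snd, smul_eq_mul]
  ring

theorem chordDefect_add_projxy_self (p : R3) (y : R2) :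
    chordDefect p (y + projxy p) = chordDefect p y := by
  simp only [chordDefect, det2, projxy, Prod.fst_add, Prod.snd_add]
  ring

theorem chordDefect_sub_projxy_self (p : R3) (y : R2) :
    chordDefect p (y - projxy p) = chordDefect p y := by
  simp only [chordDefect, det2, projxy, Prod.fst_sub, Prod.snd_sub]
  ring

theorem exists_chordDefect_eq_zero {p r : R3} (h : det2 (projxy p) (projxy r) ≠ 0) :
    ∃ y, chordDefect p y = 0 ∧ chordDefect r y = 0 := by
  simp only [chordDefect, sub_eq_zero, eq_comm (a := p.2.2), eq_comm (a := r.2.2)]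
  exact exists_det2_eq_and_det2_eq h _ _

def IsChordField (q : ℤ → ℤ → R3) (y : ℤ → ℤ → R2) : Prop :=
  ∀ u v, y (u + 1) v = y u v - projxy (D1 q u v) ∧ y u (v + 1) = y u v + projxy (D2 q u v)

namespace IsDIIAS

variable {q : ℤ → ℤ → R3}

theorem D12_eq (hq : IsDIIAS q e3) (u v : ℤ) :
    D12 q u v = det2 (projxy (D1 q u v)) (projxy (D2 q u v)) • e3 := by
  rw [(hq u v).1, Omega, det3_e3]

theorem projxy_D1 (hq : IsDIIAS q e3) (u v : ℤ) : projxy (D1 q u v) = projxy (D1 q u 0) :=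
  Function.Periodic.eq_apply_zero (f := fun v => projxy (D1 q u v))
    (fun v => by simp [D1_add_one_right, hq.D12_eq, projxy_add, projxy_smul_e3]) v

theorem projxy_D2 (hq : IsDIIAS q e3) (u v : ℤ) : projxy (D2 q u v) = projxy (D2 q 0 v) :=
  Function.Periodic.eq_apply_zero (f := fun u => projxy (D2 q u v))
    (fun u => by simp [D2_add_one_left, hq.D12_eq, projxy_add, projxy_smul_e3]) u

theorem exists_isChordField (hq : IsDIIAS q e3) (y₀ : R2) :
    ∃ y, y 0 0 = y₀ ∧ IsChordField q y := by
  refine ⟨fun u v => y₀ + (projxy (q 0 v) - projxy (q u 0)), by simp, fun u v => ⟨?_, ?_⟩⟩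
  · rw [hq.projxy_D1 u v]
    simp only [D1, projxy_sub]
    abel
  · rw [hq.projxy_D2 u v]
    simp only [D2, projxy_sub]
    abel

theorem exists_D1_sub_one (hq : IsDIIAS q e3) (u v : ℤ) :
    ∃ l m : ℝ, 0 < l ∧ D1 q (u - 1) v = l • D1 q u v + m • D2 q u v := by
  obtain ⟨l, m, h⟩ := Submodule.mem_span_pair.mp (hq u v).2.2.1
  have hΩ : Omega q e3 (u - 1) v = l * Omega q e3 u v := by
    rw [Omega, Omega, det3_e3, det3_e3, ← h,
      (hq.projxy_D2 (u - 1) v).trans (hq.projxy_D2 u v).symm]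
    simp only [det2, projxy, Prod.fst_add, Prod.snd_add, Prod.smul_fst, Prod.smul_snd,
      smul_eq_mul]
    ring
  exact ⟨l, m, pos_of_mul_pos_left (hΩ ▸ (hq (u - 1) v).2.1) (hq u v).2.1.le, h.symm⟩

theorem exists_D2_sub_one (hq : IsDIIAS q e3) (u v : ℤ) :
    ∃ l m : ℝ, 0 < m ∧ D2 q u (v - 1) = l • D1 q u v + m • D2 q u v := by
  obtain ⟨l, m, h⟩ := Submodule.mem_span_pair.mp (hq u v).2.2.2
  have hΩ : Omega q e3 u (v - 1) = m * Omega q e3 u v := by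
    rw [Omega, Omega, det3_e3, det3_e3, ← h,
      (hq.projxy_D1 u (v - 1)).trans (hq.projxy_D1 u v).symm]
    simp only [det2, projxy, Prod.fst_add, Prod.snd_add, Prod.smul_fst, Prod.smul_snd,
      smul_eq_mul]
    ring
  exact ⟨l, m, pos_of_mul_pos_left (hΩ ▸ (hq u (v - 1)).2.1) (hq u v).2.1.le, h.symm⟩

variable {y : ℤ → ℤ → R2}

theorem chordDefect_D1_add_one_right (hq : IsDIIAS q e3) (hy : IsChordField q y) (u v : ℤ) :
    chordDefect (D1 q u (v + 1)) (y u (v + 1)) = chordDefect (D1 q u v) (y u v) := by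
  rw [(hy u v).2, D1_add_one_right, hq.D12_eq]
  simp only [chordDefect, det2, projxy, e3, Prod.fst_add, Prod.snd_add, Prod.smul_fst,
    Prod.smul_snd, smul_eq_mul]
  ring

theorem chordDefect_D2_add_one_left (hq : IsDIIAS q e3) (hy : IsChordField q y) (u v : ℤ) :
    chordDefect (D2 q (u + 1) v) (y (u + 1) v) = chordDefect (D2 q u v) (y u v) := by
  rw [(hy u v).1, D2_add_one_left, hq.D12_eq]
  simp only [chordDefect, det2, projxy, e3, Prod.fst_add, Prod.snd_add, Prod.fst_sub,
    Prod.snd_sub, Prod.smul_fst, Prod.smul_snd, smul_eq_mul]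
  ring

end IsDIIAS

namespace IsChordField

variable {q : ℤ → ℤ → R3} {y : ℤ → ℤ → R2}

theorem chordDefect_D1_sub_one (hy : IsChordField q y) {u v : ℤ} {l m : ℝ}
    (h : D1 q (u - 1) v = l • D1 q u v + m • D2 q u v) :
    chordDefect (D1 q (u - 1) v) (y (u - 1) v) =
      l * chordDefect (D1 q u v) (y u v) + m * chordDefect (D2 q u v) (y u v) := by
  have hy₁ : y u v = y (u - 1) v - projxy (D1 q (u - 1) v) := by
    simpa using (hy (u - 1) v).1
  rw [← chordDefect_sub_projxy_self, ← hy₁, h, chordDefect_smul_add_smul]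

theorem chordDefect_D2_sub_one (hy : IsChordField q y) {u v : ℤ} {l m : ℝ}
    (h : D2 q u (v - 1) = l • D1 q u v + m • D2 q u v) :
    chordDefect (D2 q u (v - 1)) (y u (v - 1)) =
      l * chordDefect (D1 q u v) (y u v) + m * chordDefect (D2 q u v) (y u v) := by
  have hy₂ : y u v = y u (v - 1) + projxy (D2 q u (v - 1)) := by
    simpa using (hy u (v - 1)).2
  rw [← chordDefect_add_projxy_self, ← hy₂, h, chordDefect_smul_add_smul]

end IsChordField

theorem IsDIIAS.chordDefect_eq_zero {q : ℤ → ℤ → R3} {y : ℤ → ℤ → R2} (hq : IsDIIAS q e3)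
    (hy : IsChordField q y) (h₁ : chordDefect (D1 q 0 0) (y 0 0) = 0)
    (h₂ : chordDefect (D2 q 0 0) (y 0 0) = 0) (u v : ℤ) :
    chordDefect (D1 q u v) (y u v) = 0 ∧ chordDefect (D2 q u v) (y u v) = 0 := by
  set F := fun u v => chordDefect (D1 q u v) (y u v)
  set G := fun u v => chordDefect (D2 q u v) (y u v)
  have hF : ∀ u v, F u v = F u 0 := fun u =>
    Function.Periodic.eq_apply_zero (hq.chordDefect_D1_add_one_right hy u)
  have hG : ∀ u v, G u v = G 0 v := fun u v =>
    Function.Periodic.eq_apply_zero (f := (G · v)) (hq.chordDefect_D2_add_one_left hy · v) u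
  have hF₀ : ∀ u, F u 0 = 0 := Int.eq_zero_of_forall_sub_one_eq_mul h₁ fun u => by
    obtain ⟨l, m, hl, h⟩ := hq.exists_D1_sub_one u 0
    exact ⟨l, hl.ne', by simp only [F, hy.chordDefect_D1_sub_one h, hG u 0, G, h₂, mul_zero,
      add_zero]⟩
  have hG₀ : ∀ v, G 0 v = 0 := Int.eq_zero_of_forall_sub_one_eq_mul h₂ fun v => by
    obtain ⟨l, m, hm, h⟩ := hq.exists_D2_sub_one 0 v
    exact ⟨m, hm.ne', by simp only [G, hy.chordDefect_D2_sub_one h, hF 0 v, F, h₁, mul_zero,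
      zero_add]⟩
  exact ⟨(hF u v).trans (hF₀ u), (hG u v).trans (hG₀ v)⟩

theorem exists_xcc_ycc {x y : ℤ → ℤ → R2}
    (h₁ : ∀ u v, x (u + 1) v + y (u + 1) v = x u v + y u v)
    (h₂ : ∀ u v, x u (v + 1) - y u (v + 1) = x u v - y u v) :
    ∃ α β, ∀ u v, xcc α β u v = x u v ∧ ycc α β u v = y u v := by
  have hα : ∀ u v, x u v - y u v = x u 0 - y u 0 := fun u =>
    Function.Periodic.eq_apply_zero (h₂ u)
  have hβ : ∀ u v, x u v + y u v = x 0 v + y 0 v := fun u v =>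
    Function.Periodic.eq_apply_zero (f := fun u => x u v + y u v) (h₁ · v) u
  refine ⟨fun u => x u 0 - y u 0, fun v => x 0 v + y 0 v, fun u v => ⟨?_, ?_⟩⟩ <;>
  · simp only [xcc, ycc, ← hα u v, ← hβ u v]
    module

/-- every DIIAS with affine normal `(0,0,1)` is obtained by the
discrete centre-chord construction. -/
theorem stmt5 (q : ℤ → ℤ → R3) (hq : IsDIIAS q e3) :
    ∃ α β : ℤ → R2, ∀ u v : ℤ,
      projxy (q u v) = xcc α β u v ∧
      (q (u + 1) v).2.2 - (q u v).2.2 =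
        det2 (projxy (q (u + 1) v) - projxy (q u v)) (ycc α β u v) ∧
      (q u (v + 1)).2.2 - (q u v).2.2 =
        det2 (projxy (q u (v + 1)) - projxy (q u v)) (ycc α β u v) := by
  obtain ⟨y₀, h₁, h₂⟩ := exists_chordDefect_eq_zero (p := D1 q 0 0) (r := D2 q 0 0)
    (by rw [← det3_e3]; exact (hq 0 0).2.1.ne')
  obtain ⟨y, rfl, hy⟩ := hq.exists_isChordField y₀
  obtain ⟨α, β, hαβ⟩ := exists_xcc_ycc (x := fun u v => projxy (q u v)) (y := y)
    (fun u v => by rw [(hy u v).1, D1, projxy_sub]; abel)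
    (fun u v => by rw [(hy u v).2, D2, projxy_sub]; abel)
  refine ⟨α, β, fun u v => ⟨(hαβ u v).1.symm, ?_, ?_⟩⟩ <;> rw [(hαβ u v).2, ← sub_eq_zero]
  · exact (hq.chordDefect_eq_zero hy h₁ h₂ u v).1
  · exact (hq.chordDefect_eq_zero hy h₁ h₂ u v).2
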